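/- arXiv:1511.05677 — 9 statements merged into one kernel-verified Lean document; each statement's English description precedes it below -/
import Mathlib

section
/- Let N ≥ 1 be an integer and let α, τ, λ, μ, ω̄ be real numbers with τ + α > 0. Set ρ = 1/(2(τ + α)) and assume 1 − λρ ≠ 0 and 1 + λρ(N−1) ≠ 0. Define a = ρ/(1 − λρ) and b = ρ/(1 + λρ(N−1)). Then for every vector g = (g_1,…,g_N) ∈ ℝ^N, writing Ḡ = (1/N)·Σ_{j=1}^N g_j and s_i = a·(g_i − Ḡ) + b·(Ḡ − μ·ω̄), we have for every i: s_i = ρ·( g_i − μ·ω̄ − λ·Σ_{j ≠ i} s_j ). -/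
/-! Deviations from the mean sum to zero, so the linear strategy's total is `N·b·(Ḡ − μω̄)`, and
the sum over the others is this total minus `s i`. Substituting, the fixed-point equation splits
along `g i − Ḡ` and `Ḡ − μω̄`, and the two coefficients match exactly because
`a (1 − λρ) = ρ` and `b (1 + λρ(N − 1)) = ρ`. -/

open Finset

theorem sum_sub_mean_eq_zero {ι : Type*} [Fintype ι] [Nonempty ι] (g : ι → ℝ) :
    ∑ j, (g j - (1 / (Fintype.card ι : ℝ)) * ∑ k, g k) = 0 := by
  have hcard : (Fintype.card ι : ℝ) ≠ 0 := Nat.cast_ne_zero.mpr Fintype.card_ne_zero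
  rw [sum_sub_distrib, sum_const, card_univ, nsmul_eq_mul]
  field_simp
  ring

theorem sum_add_mul_sub_eq {ι : Type*} [Fintype ι] (a c m : ℝ) (g : ι → ℝ)
    (hg : ∑ j, (g j - m) = 0) :
    ∑ j, (a * (g j - m) + c) = Fintype.card ι * c := by
  rw [sum_add_distrib, ← mul_sum, hg, sum_const, card_univ, nsmul_eq_mul, mul_zero, zero_add]

theorem eq_mul_sub_sum_erase_of_linear {ι : Type*} [Fintype ι] [DecidableEq ι]
    {ρ lam a b m Gbar : ℝ} {g s : ι → ℝ} (hg : ∑ j, (g j - Gbar) = 0)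
    (ha : a * (1 - lam * ρ) = ρ)
    (hb : b * (1 + lam * ρ * ((Fintype.card ι : ℝ) - 1)) = ρ)
    (hs : ∀ i, s i = a * (g i - Gbar) + b * (Gbar - m)) (i : ι) :
    s i = ρ * (g i - m - lam * ∑ j ∈ univ.erase i, s j) := by
  have htotal : ∑ j, s j = Fintype.card ι * (b * (Gbar - m)) := by
    simp only [hs]
    exact sum_add_mul_sub_eq a _ Gbar g hg
  rw [sum_erase_eq_sub (mem_univ i), htotal, hs i]
  linear_combination (g i - Gbar) * ha + (Gbar - m) * hb

theorem stmt_4_general (N : ℕ) (lam μ ωbar : ℝ)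
    (ρ a b : ℝ)
    (h1 : 1 - lam * ρ ≠ 0)
    (h2 : 1 + lam * ρ * ((N : ℝ) - 1) ≠ 0)
    (ha : a = ρ / (1 - lam * ρ))
    (hb : b = ρ / (1 + lam * ρ * ((N : ℝ) - 1)))
    (g : Fin N → ℝ) (Gbar : ℝ) (hG : Gbar = (1 / (N : ℝ)) * ∑ j, g j)
    (s : Fin N → ℝ)
    (hs : ∀ i, s i = a * (g i - Gbar) + b * (Gbar - μ * ωbar)) :
    ∀ i, s i = ρ * (g i - μ * ωbar - lam * ∑ j ∈ Finset.univ.erase i, s j) := by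
  intro i
  have : Nonempty (Fin N) := ⟨i⟩
  have hg : ∑ j, (g j - Gbar) = 0 := by
    simpa only [hG, Fintype.card_fin] using sum_sub_mean_eq_zero g
  refine eq_mul_sub_sum_erase_of_linear hg ?_ ?_ hs i
  · rw [ha, div_mul_cancel₀ ρ h1]
  · rw [Fintype.card_fin, hb, div_mul_cancel₀ ρ h2]

/-- Fixed-point verification of the linear Nash equilibrium strategy under
complete information (Proposition 3). -/
theorem stmt_4 (N : ℕ) (hN : 1 ≤ N) (α τ lam μ ωbar : ℝ)
    (hτα : 0 < τ + α) (ρ a b : ℝ) (hρ : ρ = 1 / (2 * (τ + α)))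
    (h1 : 1 - lam * ρ ≠ 0)
    (h2 : 1 + lam * ρ * ((N : ℝ) - 1) ≠ 0)
    (ha : a = ρ / (1 - lam * ρ))
    (hb : b = ρ / (1 + lam * ρ * ((N : ℝ) - 1)))
    (g : Fin N → ℝ) (Gbar : ℝ) (hG : Gbar = (1 / (N : ℝ)) * ∑ j, g j)
    (s : Fin N → ℝ)
    (hs : ∀ i, s i = a * (g i - Gbar) + b * (Gbar - μ * ωbar)) :
    ∀ i, s i = ρ * (g i - μ * ωbar - lam * ∑ j ∈ Finset.univ.erase i, s j) :=
  stmt_4_general N lam μ ωbar ρ a b h1 h2 ha hb g Gbar hG s hs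
end

section
/- Let γ > 0 and α > 0 be real numbers, and for each integer N ≥ 1 define b_S(N) = 1/( 2(γ/N + α) + (γ/N)(N−1) ) and b_U(N) = 1/( 2(γ/N + α) + (2γ/N)(N−1) ). Then b_S(N)/b_U(N) converges, as N → ∞, to 2(γ+α)/(γ+2α), and 2(γ+α)/(γ+2α) > 1. -/
open Filter Topology

/-! The altruistic denominator collapses to `2(γ + α)` for every `N`, while the selfish one is
`γ + 2α + γ/N`, which tends to `γ + 2α`; the limit ratio exceeds `1` because `2(γ + α) - (γ + 2α) = γ`. -/

lemma selfish_denom_eq (γ α : ℝ) {N : ℕ} (hN : N ≠ 0) :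
    2 * (γ / N + α) + (γ / N) * ((N : ℝ) - 1) = γ + 2 * α + γ / N := by
  field_simp
  ring

lemma altruistic_denom_eq (γ α : ℝ) {N : ℕ} (hN : N ≠ 0) :
    2 * (γ / N + α) + (2 * γ / N) * ((N : ℝ) - 1) = 2 * (γ + α) := by
  field_simp
  ring

lemma tendsto_div_add_div_natCast (c d x : ℝ) (hd : d ≠ 0) :
    Tendsto (fun N : ℕ => c / (d + x / N)) atTop (𝓝 (c / d)) := by
  have hx : Tendsto (fun N : ℕ => x / N) atTop (𝓝 0) :=
    tendsto_const_nhds.div_atTop tendsto_natCast_atTop_atTop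
  have hden : Tendsto (fun N : ℕ => d + x / N) atTop (𝓝 d) := by
    simpa only [add_zero] using tendsto_const_nhds.add hx
  exact tendsto_const_nhds.div hden hd

lemma one_lt_two_mul_add_div {γ α : ℝ} (hγ : 0 < γ) (hα : 0 < α) :
    1 < 2 * (γ + α) / (γ + 2 * α) := by
  rw [one_lt_div (by positivity)]
  linarith

/-- Corollary 1, item 1: the ratio of selfish to altruistic expected
consumption constants tends to `2(γ+α)/(γ+2α) > 1`. -/
theorem stmt_6 (γ α : ℝ) (hγ : 0 < γ) (hα : 0 < α)
    (bS bU : ℕ → ℝ)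
    (hbS : ∀ N : ℕ, 1 ≤ N →
      bS N = 1 / (2 * (γ / N + α) + (γ / N) * ((N : ℝ) - 1)))
    (hbU : ∀ N : ℕ, 1 ≤ N →
      bU N = 1 / (2 * (γ / N + α) + (2 * γ / N) * ((N : ℝ) - 1))) :
    Tendsto (fun N => bS N / bU N) atTop (nhds (2 * (γ + α) / (γ + 2 * α)))
    ∧ 1 < 2 * (γ + α) / (γ + 2 * α) := by
  refine ⟨?_, one_lt_two_mul_add_div hγ hα⟩
  refine (tendsto_div_add_div_natCast _ _ γ (by positivity)).congr' ?_
  filter_upwards [eventually_ge_atTop 1] with N hN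
  have hN0 : N ≠ 0 := by omega
  rw [hbS N hN, hbU N hN, selfish_denom_eq γ α hN0, altruistic_denom_eq γ α hN0,
    one_div, one_div, div_inv_eq_mul, inv_mul_eq_div]
end

section
/- Let N ≥ 1 be an integer, let γ > 0, α > 0, ḡ, σ, a, b be real numbers, and let g_1,…,g_N be square-integrable real random variables on a probability space with E[g_i] = ḡ for all i, E[(g_i − ḡ)²] = 1 for all i, and E[(g_i − ḡ)(g_j − ḡ)] = σ for all i ≠ j. Let ω be an integrable real random variable with E[ω] = 0 that is independent of the random vector (g_1,…,g_N). Define s_i = a·(g_i − ḡ) + b·ḡ, L = Σ_{i=1}^N s_i, and the aggregate utility U = Σ_{i=1}^N ( −s_i·(γ/N)·(L + ω) + g_i·s_i − α·s_i² ). Then E[U]/N = ( b − (γ+α)·b² )·ḡ² − ( ((N−1)/N)·γ·σ + γ/N + α )·a² + a. -/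
/-!
Substituting `L = ∑ j, s j`, the expected aggregate utility is a linear combination of the
second moments `E[s_i s_j]`, `E[g_i s_i]` and `E[s_i ω]`. For the affine strategies these are
`a² Cov(g_i, g_j) + (b ḡ)²`, `a + ḡ (b ḡ)` and `0` (ω is centred and independent of the
preferences); each row `∑ⱼ E[s_i s_j]` contains one variance and `N - 1` covariances `σ`.
-/

open MeasureTheory ProbabilityTheory

lemma sum_eq_add_mul_of_ne {ι : Type*} [Fintype ι] [DecidableEq ι] {f : ι → ℝ} {σ : ℝ}
    (i : ι) (hf : ∀ j, j ≠ i → f j = σ) :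
    ∑ j, f j = f i + ((Fintype.card ι : ℝ) - 1) * σ := by
  rw [Fintype.sum_eq_add_sum_compl i, Finset.sum_congr rfl fun j hj => hf j (by simpa using hj),
    Finset.sum_const, Finset.card_compl, Finset.card_singleton, nsmul_eq_mul,
    Nat.cast_sub (Fintype.card_pos_iff.2 ⟨i⟩), Nat.cast_one]

section

variable {Ω : Type*} [MeasurableSpace Ω] {μ : Measure Ω}

lemma integral_sum_utility {ι : Type*} [Fintype ι] (κ α : ℝ) {s g : ι → Ω → ℝ}
    {w : Ω → ℝ} (hs : ∀ i, MemLp (s i) 2 μ) (hg : ∀ i, MemLp (g i) 2 μ)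
    (hsw : ∀ i, Integrable (fun x => s i x * w x) μ) :
    ∫ x, ∑ i, (-(s i x) * κ * (∑ j, s j x + w x) + g i x * s i x - α * s i x ^ 2) ∂μ
      = ∑ i, (-κ * (∑ j, ∫ x, s i x * s j x ∂μ + ∫ x, s i x * w x ∂μ)
          + ∫ x, g i x * s i x ∂μ - α * ∫ x, s i x * s i x ∂μ) := by
  have hss : ∀ i j, Integrable (fun x => s i x * s j x) μ :=
    fun i j => (hs i).integrable_mul (hs j)
  have hgs : ∀ i, Integrable (fun x => g i x * s i x) μ :=
    fun i => (hg i).integrable_mul (hs i)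
  have hsum : ∀ i, Integrable (fun x => ∑ j, s i x * s j x) μ :=
    fun i => integrable_finsetSum _ fun j _ => hss i j
  calc ∫ x, ∑ i, (-(s i x) * κ * (∑ j, s j x + w x) + g i x * s i x - α * s i x ^ 2) ∂μ
      = ∫ x, ∑ i, (-κ * (∑ j, s i x * s j x + s i x * w x) + g i x * s i x
          - α * (s i x * s i x)) ∂μ := by
        congr 1; funext x; congr 1; funext i; rw [← Finset.mul_sum]; ring
    _ = _ := by
        rw [integral_finsetSum _ fun i _ => by fun_prop]
        refine Finset.sum_congr rfl fun i _ => ?_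
        rw [integral_sub (by fun_prop) (by fun_prop), integral_add (by fun_prop) (by fun_prop),
          integral_const_mul, integral_const_mul, integral_add (hsum i) (hsw i),
          integral_finsetSum _ fun j _ => hss i j]

section Moments

variable [IsProbabilityMeasure μ]

lemma integral_affine_mul_affine {X Y : Ω → ℝ} {m n : ℝ}
    (hX : MemLp X 2 μ) (hY : MemLp Y 2 μ) (hXm : ∫ x, X x ∂μ = m)
    (hYn : ∫ x, Y x ∂μ = n) (a b c d : ℝ) :
    ∫ x, (a * (X x - m) + c) * (b * (Y x - n) + d) ∂μ
      = a * b * ∫ x, (X x - m) * (Y x - n) ∂μ + c * d := by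
  have hXY : Integrable (fun x => (X x - m) * (Y x - n)) μ :=
    (hX.sub (memLp_const m)).integrable_mul (hY.sub (memLp_const n))
  have hXi := hX.integrable one_le_two
  have hYi := hY.integrable one_le_two
  calc ∫ x, (a * (X x - m) + c) * (b * (Y x - n) + d) ∂μ
      = ∫ x, (a * b * ((X x - m) * (Y x - n)) + a * d * (X x - m) + b * c * (Y x - n)
          + c * d) ∂μ := by
        congr 1; funext x; ring
    _ = a * b * ∫ x, (X x - m) * (Y x - n) ∂μ + c * d := by
        rw [integral_add (by fun_prop) (integrable_const _),
          integral_add (by fun_prop) (by fun_prop), integral_add (by fun_prop) (by fun_prop),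
          integral_const_mul, integral_const_mul, integral_const_mul,
          integral_sub hXi (integrable_const _),
          integral_sub hYi (integrable_const _), hXm, hYn, integral_const]
        simp

variable {ι : Type*} {g : ι → Ω → ℝ} {gbar : ℝ}
  (hL2 : ∀ i, MemLp (g i) 2 μ) (hmean : ∀ i, ∫ x, g i x ∂μ = gbar)
  (hvar : ∀ i, ∫ x, (g i x - gbar) ^ 2 ∂μ = 1)
include hL2 hmean hvar

lemma integral_affine_mul_self (i : ι) (a c : ℝ) :
    ∫ x, (a * (g i x - gbar) + c) * (a * (g i x - gbar) + c) ∂μ = a ^ 2 + c ^ 2 := by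
  rw [integral_affine_mul_affine (hL2 i) (hL2 i) (hmean i) (hmean i)]
  simp only [← sq, hvar]
  ring

lemma integral_mul_affine (i : ι) (a c : ℝ) :
    ∫ x, g i x * (a * (g i x - gbar) + c) ∂μ = a + gbar * c := by
  have h := integral_affine_mul_affine (hL2 i) (hL2 i) (hmean i) (hmean i) 1 a gbar c
  simp only [← sq, hvar, one_mul, mul_one, sub_add_cancel] at h
  exact h

lemma sum_integral_affine_mul_affine [Fintype ι] [DecidableEq ι] {σ : ℝ}
    (hcov : ∀ i j, i ≠ j → ∫ x, (g i x - gbar) * (g j x - gbar) ∂μ = σ)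
    (i : ι) (a c : ℝ) :
    ∑ j, ∫ x, (a * (g i x - gbar) + c) * (a * (g j x - gbar) + c) ∂μ
      = a ^ 2 + c ^ 2 + ((Fintype.card ι : ℝ) - 1) * (a * a * σ + c * c) := by
  rw [sum_eq_add_mul_of_ne i fun j hj => by
      rw [integral_affine_mul_affine (hL2 i) (hL2 j) (hmean i) (hmean j), hcov i j hj.symm],
    integral_affine_mul_self hL2 hmean hvar]

end Moments

end

theorem stmt_13_general {Ω : Type*} [MeasurableSpace Ω] (μ : Measure Ω) [IsProbabilityMeasure μ]
    (N : ℕ) (hN : 1 ≤ N) (γ α gbar σ a b : ℝ)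
    (g : Fin N → Ω → ℝ)
    (hL2 : ∀ i, MemLp (g i) 2 μ)
    (hmean : ∀ i, (∫ x, g i x ∂μ) = gbar)
    (hvar : ∀ i, (∫ x, (g i x - gbar) ^ 2 ∂μ) = 1)
    (hcov : ∀ i j, i ≠ j → (∫ x, (g i x - gbar) * (g j x - gbar) ∂μ) = σ)
    (ω : Ω → ℝ) (hωint : Integrable ω μ) (hωmean : (∫ x, ω x ∂μ) = 0)
    (hindep : IndepFun ω (fun x (i : Fin N) => g i x) μ)
    (s : Fin N → Ω → ℝ)
    (hs : ∀ i x, s i x = a * (g i x - gbar) + b * gbar)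
    (L : Ω → ℝ) (hL : ∀ x, L x = ∑ i, s i x)
    (U : Ω → ℝ)
    (hU : ∀ x, U x = ∑ i,
      (-(s i x) * (γ / N) * (L x + ω x) + g i x * s i x - α * s i x ^ 2)) :
    (∫ x, U x ∂μ) / N
      = (b - (γ + α) * b ^ 2) * gbar ^ 2
        - ((((N : ℝ) - 1) / N) * γ * σ + γ / N + α) * a ^ 2 + a := by
  obtain rfl : L = _ := funext hL
  obtain rfl : U = _ := funext hU
  obtain rfl : s = _ := funext fun i => funext (hs i)
  have hsL2 : ∀ i, MemLp (fun x => a * (g i x - gbar) + b * gbar) 2 μ :=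
    fun i => (((hL2 i).sub (memLp_const gbar)).const_mul a).add (memLp_const _)
  have hsω : ∀ i, IndepFun (fun x => a * (g i x - gbar) + b * gbar) ω μ := fun i =>
    (hindep.comp measurable_id (by fun_prop : Measurable
      fun v : Fin N → ℝ => a * (v i - gbar) + b * gbar)).symm
  have hsω0 : ∀ i, ∫ x, (a * (g i x - gbar) + b * gbar) * ω x ∂μ = 0 := fun i => by
    rw [(hsω i).integral_fun_mul_eq_mul_integral (hsL2 i).aestronglyMeasurable
      hωint.aestronglyMeasurable, hωmean, mul_zero]
  rw [integral_sum_utility _ _ hsL2 hL2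
    fun i => (hsω i).integrable_mul ((hsL2 i).integrable one_le_two) hωint]
  simp only [sum_integral_affine_mul_affine hL2 hmean hvar hcov, hsω0,
    integral_mul_affine hL2 hmean hvar, integral_affine_mul_self hL2 hmean hvar,
    Finset.sum_const, Finset.card_univ, Fintype.card_fin, nsmul_eq_mul]
  have hN0 : (N : ℝ) ≠ 0 := Nat.cast_ne_zero.2 (by omega)
  field_simp
  ring

/-- eq. (36): expected normalized aggregate utility for symmetric BNE
strategies `s_i = a(g_i − ḡ) + bḡ` when the renewable term has mean 0 and is
independent of the preferences. -/
theorem stmt_13 {Ω : Type*} [MeasurableSpace Ω] (μ : Measure Ω) [IsProbabilityMeasure μ]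
    (N : ℕ) (hN : 1 ≤ N) (γ α gbar σ a b : ℝ) (hγ : 0 < γ) (hα : 0 < α)
    (g : Fin N → Ω → ℝ)
    (hL2 : ∀ i, MemLp (g i) 2 μ)
    (hmean : ∀ i, (∫ x, g i x ∂μ) = gbar)
    (hvar : ∀ i, (∫ x, (g i x - gbar) ^ 2 ∂μ) = 1)
    (hcov : ∀ i j, i ≠ j → (∫ x, (g i x - gbar) * (g j x - gbar) ∂μ) = σ)
    (ω : Ω → ℝ) (hωint : Integrable ω μ) (hωmean : (∫ x, ω x ∂μ) = 0)
    (hindep : IndepFun ω (fun x (i : Fin N) => g i x) μ)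
    (s : Fin N → Ω → ℝ)
    (hs : ∀ i x, s i x = a * (g i x - gbar) + b * gbar)
    (L : Ω → ℝ) (hL : ∀ x, L x = ∑ i, s i x)
    (U : Ω → ℝ)
    (hU : ∀ x, U x = ∑ i,
      (-(s i x) * (γ / N) * (L x + ω x) + g i x * s i x - α * s i x ^ 2)) :
    (∫ x, U x ∂μ) / N
      = (b - (γ + α) * b ^ 2) * gbar ^ 2
        - ((((N : ℝ) - 1) / N) * γ * σ + γ / N + α) * a ^ 2 + a :=
  stmt_13_general μ N hN γ α gbar σ a b g hL2 hmean hvar hcov ω hωint hωmean hindep s hs L hL U hU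
end

section
/- Let γ > 0 and α > 0 be real numbers and let σ ∈ (0,1]. Define f(a) = a − (γσ + α)·a², a_P = 1/(γσ + 2α), and a_C = 1/(2α). Then f(a_P) > f(a_C). -/
/-- Corollary 7, item 1, selfish case: for `f(a) = a − (γσ+α)a²`,
`a_P = 1/(γσ+2α)` and `a_C = 1/(2α)`, we have `f(a_P) > f(a_C)`. -/
theorem stmt_14 (γ α σ : ℝ) (hγ : 0 < γ) (hα : 0 < α) (hσ : σ ∈ Set.Ioc (0 : ℝ) 1)
    (f : ℝ → ℝ) (hf : ∀ a, f a = a - (γ * σ + α) * a ^ 2)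
    (aP aC : ℝ) (haP : aP = 1 / (γ * σ + 2 * α)) (haC : aC = 1 / (2 * α)) :
    f aC < f aP := by
  obtain ⟨hσ0, hσ1⟩ := hσ
  have hc : 0 < γ * σ := mul_pos hγ hσ0
  have h1 : 0 < γ * σ + 2 * α := by linarith
  rw [hf, hf, haP, haC]
  rw [div_pow, div_pow, one_pow]
  rw [show (1:ℝ)/(γ*σ+2*α) - (γ*σ+α) * (1/(γ*σ+2*α)^2) = α/(γ*σ+2*α)^2 by
    field_simp; ring]
  rw [show (1:ℝ)/(2*α) - (γ*σ+α) * (1/(2*α)^2) = (α - γ*σ)/(2*α)^2 by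
    field_simp; ring]
  rw [div_lt_div_iff₀ (by positivity) (by positivity)]
  nlinarith [sq_nonneg (γ*σ), mul_pos hc hc, mul_pos (mul_pos hc hc) hc, mul_pos hc hα, mul_pos (mul_pos hc hc) hα, mul_pos (mul_pos hc hα) hα]
end

section
/- Let γ > 0 and α > 0 be real numbers. Define c(b) = b − (γ+α)·b², b_S = 1/(γ + 2α), and b_U = 1/(2(γ+α)). Then c(b_S)/c(b_U) = (4α² + 4αγ)/(4α² + 4αγ + γ²), and this ratio is strictly less than 1. -/
/-- Corollary 8, item 1 / eq. (39): for `c(b) = b − (γ+α)b²`,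
`b_S = 1/(γ+2α)` and `b_U = 1/(2(γ+α))`, the ratio `c(b_S)/c(b_U)` equals
`(4α²+4αγ)/(4α²+4αγ+γ²) < 1`. -/
theorem stmt_15 (γ α : ℝ) (hγ : 0 < γ) (hα : 0 < α)
    (c : ℝ → ℝ) (hc : ∀ b, c b = b - (γ + α) * b ^ 2)
    (bS bU : ℝ) (hbS : bS = 1 / (γ + 2 * α)) (hbU : bU = 1 / (2 * (γ + α))) :
    c bS / c bU = (4 * α ^ 2 + 4 * α * γ) / (4 * α ^ 2 + 4 * α * γ + γ ^ 2)
    ∧ (4 * α ^ 2 + 4 * α * γ) / (4 * α ^ 2 + 4 * α * γ + γ ^ 2) < 1 := by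
  have h1 : γ + 2 * α ≠ 0 := by positivity
  have h2 : γ + α ≠ 0 := by positivity
  have h3 : 4 * α ^ 2 + 4 * α * γ + γ ^ 2 > 0 := by positivity
  constructor
  · rw [hc, hc, hbS, hbU]
    rw [div_eq_div_iff]
    · field_simp
      ring
    · have : 1 / (2 * (γ + α)) - (γ + α) * (1 / (2 * (γ + α))) ^ 2
        = 1 / (4 * (γ + α)) := by field_simp; ring
      rw [this]; positivity
    · exact ne_of_gt h3
  · rw [div_lt_one h3]
    nlinarith [sq_nonneg γ]
end

section
/- Let γ > 0, κ > 0 and α > 0 be real numbers. Define c(b) = b − (γ+α)·b², b_W = 1/(2(κ+α)), and b_U = 1/(2(γ+α)). Then c(b_W)/c(b_U) = (γ+α)·(2κ + α − γ)/(κ+α)², and if γ ≠ κ this ratio is strictly less than 1. -/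
/-- Corollary 8, item 2: for `c(b) = b − (γ+α)b²`,
`b_W = 1/(2(κ+α))` and `b_U = 1/(2(γ+α))`, the ratio `c(b_W)/c(b_U)` equals
`(γ+α)(2κ+α−γ)/(κ+α)²`, and is strictly less than 1 whenever `γ ≠ κ`. -/
theorem stmt_16 (γ κ α : ℝ) (hγ : 0 < γ) (hκ : 0 < κ) (hα : 0 < α)
    (c : ℝ → ℝ) (hc : ∀ b, c b = b - (γ + α) * b ^ 2)
    (bW bU : ℝ) (hbW : bW = 1 / (2 * (κ + α))) (hbU : bU = 1 / (2 * (γ + α))) :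
    c bW / c bU = (γ + α) * (2 * κ + α - γ) / (κ + α) ^ 2
    ∧ (γ ≠ κ → (γ + α) * (2 * κ + α - γ) / (κ + α) ^ 2 < 1) := by
  have hka : (0:ℝ) < κ + α := by linarith
  have hga : (0:ℝ) < γ + α := by linarith
  constructor
  · rw [hc, hc, hbW, hbU]
    rw [div_eq_div_iff]
    · field_simp
      ring
    · have : (1 / (2 * (γ + α)) - (γ + α) * (1 / (2 * (γ + α))) ^ 2) = 1 / (4 * (γ + α)) := by
        field_simp
        ring
      rw [this]
      positivity
    · positivity
  · intro hne
    rw [div_lt_one (by positivity)]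
    nlinarith [sq_pos_of_ne_zero (sub_ne_zero.mpr (fun h => hne h.symm) : κ - γ ≠ 0)]
end

section
/- Let N ≥ 1 be an integer, let γ > 0, κ > 0, α > 0, ḡ, σ, a, b be real numbers, and let g_1,…,g_N be square-integrable real random variables on a probability space with E[g_i] = ḡ for all i, E[(g_i − ḡ)²] = 1 for all i, and E[(g_i − ḡ)(g_j − ḡ)] = σ for all i ≠ j. Let ω be any measurable real random variable on the same space. Define s_i = a·(g_i − ḡ) + b·ḡ, L = Σ_{i=1}^N s_i, the aggregate utility U = Σ_{i=1}^N ( −s_i·(γ/N)·(L + ω) + g_i·s_i − α·s_i² ), the net revenue NR = (γ/N)·(L + ω)·L − (κ/N)·L², and the welfare W = U + NR. Then E[W]/N = ( b − (κ+α)·b² )·ḡ² − ( ((N−1)/N)·κ·σ + κ/N + α )·a² + a. -/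
open MeasureTheory

/-! The price is paid by the consumers and received by the operator, so it cancels from the
welfare, leaving `W = ∑ (g_i s_i - α s_i²) - (κ/N) L²`. With `h_i = g_i - ḡ` every term is a
product of two affine functions of a centred variable (`h_i`, or `∑ h_i` for `L`), whose
expectation only involves `E[h_i²] = 1` and `E[(∑ h_i)²] = N (1 + (N - 1) σ)`. -/

theorem sum_utility_add_netRevenue {ι : Type*} (t : Finset ι) (s g : ι → ℝ) (c r α κ : ℝ) :
    ∑ i ∈ t, (-(s i) * c * r + g i * s i - α * s i ^ 2)
        + (c * r * ∑ i ∈ t, s i - κ * (∑ i ∈ t, s i) ^ 2)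
      = ∑ i ∈ t, (g i * s i - α * s i ^ 2) - κ * (∑ i ∈ t, s i) ^ 2 := by
  have hsummand : ∀ i, -(s i) * c * r + g i * s i - α * s i ^ 2
      = (g i * s i - α * s i ^ 2) - c * r * s i := fun i ↦ by ring
  simp only [hsummand, Finset.sum_sub_distrib, Finset.mul_sum]
  ring

theorem Fintype.sum_ite_eq_add_card_sub_one_mul {ι : Type*} [Fintype ι] [DecidableEq ι]
    (i : ι) (v σ : ℝ) : ∑ j, (if i = j then v else σ) = v + (Fintype.card ι - 1) * σ := by
  rw [Finset.sum_ite, Finset.filter_eq, Finset.filter_ne]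
  simp [Finset.card_erase_of_mem, Nat.cast_pred (Fintype.card_pos_iff.2 ⟨i⟩)]

section Moments

variable {Ω : Type*} [MeasurableSpace Ω] {μ : Measure Ω}

theorem integral_affine_mul_affine_s17 [IsProbabilityMeasure μ] {h : Ω → ℝ} (hh : MemLp h 2 μ)
    (h0 : ∫ x, h x ∂μ = 0) (p q r t : ℝ) :
    ∫ x, (p * h x + q) * (r * h x + t) ∂μ = p * r * ∫ x, h x ^ 2 ∂μ + q * t := by
  have hexp : ∀ x, (p * h x + q) * (r * h x + t)
      = p * r * h x ^ 2 + (p * t + q * r) * h x + q * t := fun x ↦ by ring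
  have hsq : Integrable (fun x ↦ p * r * h x ^ 2) μ := hh.integrable_sq.const_mul _
  have hlin : Integrable (fun x ↦ (p * t + q * r) * h x) μ :=
    (hh.integrable one_le_two).const_mul _
  have hquad : Integrable (fun x ↦ p * r * h x ^ 2 + (p * t + q * r) * h x) μ := hsq.add hlin
  simp_rw [hexp]
  rw [integral_add hquad (integrable_const _), integral_add hsq hlin,
    integral_const_mul, integral_const_mul, h0]
  simp

theorem integral_sq_sum_of_integral_mul_eq_ite {ι : Type*} [Fintype ι] [DecidableEq ι]
    {h : ι → Ω → ℝ} (hh : ∀ i, MemLp (h i) 2 μ) {v σ : ℝ}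
    (hcov : ∀ i j, ∫ x, h i x * h j x ∂μ = if i = j then v else σ) :
    ∫ x, (∑ i, h i x) ^ 2 ∂μ = Fintype.card ι * (v + (Fintype.card ι - 1) * σ) := by
  have hint : ∀ i j, Integrable (fun x ↦ h i x * h j x) μ :=
    fun i j ↦ (hh i).integrable_mul (hh j)
  simp_rw [sq, Finset.sum_mul_sum]
  rw [integral_finsetSum _ fun i _ ↦ integrable_finsetSum _ fun j _ ↦ hint i j]
  simp_rw [integral_finsetSum _ fun j _ ↦ hint _ j, hcov,
    Fintype.sum_ite_eq_add_card_sub_one_mul]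
  simp [mul_add]

variable [IsProbabilityMeasure μ]

theorem integral_surplus {h : Ω → ℝ} (hh : MemLp h 2 μ) (h0 : ∫ x, h x ∂μ = 0)
    (h2 : ∫ x, h x ^ 2 ∂μ = 1) (a c d α : ℝ) :
    ∫ x, ((h x + d) * (a * h x + c) - α * (a * h x + c) ^ 2) ∂μ
      = a + d * c - α * (a ^ 2 + c ^ 2) := by
  have hprod : ∫ x, (h x + d) * (a * h x + c) ∂μ = a + d * c := by
    simpa [h2] using integral_affine_mul_affine_s17 hh h0 1 d a c
  have hsq_aff : ∫ x, (a * h x + c) ^ 2 ∂μ = a ^ 2 + c ^ 2 := by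
    simpa [h2, ← sq] using integral_affine_mul_affine_s17 hh h0 a c a c
  have haff : MemLp (fun x ↦ a * h x + c) 2 μ := (hh.const_mul a).add (memLp_const c)
  have hshift : MemLp (fun x ↦ h x + d) 2 μ := hh.add (memLp_const d)
  have hprodI : Integrable (fun x ↦ (h x + d) * (a * h x + c)) μ := hshift.integrable_mul haff
  rw [integral_sub hprodI (haff.integrable_sq.const_mul α),
    integral_const_mul, hprod, hsq_aff]

theorem integral_sq_sum_affine {ι : Type*} [Fintype ι] [DecidableEq ι] {h : ι → Ω → ℝ}
    (hh : ∀ i, MemLp (h i) 2 μ) (h0 : ∀ i, ∫ x, h i x ∂μ = 0) {σ : ℝ}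
    (hcov : ∀ i j, ∫ x, h i x * h j x ∂μ = if i = j then 1 else σ) (a c : ℝ) :
    ∫ x, (∑ i, (a * h i x + c)) ^ 2 ∂μ
      = Fintype.card ι * (a ^ 2 * (1 + (Fintype.card ι - 1) * σ) + Fintype.card ι * c ^ 2) := by
  set n : ℝ := (Fintype.card ι : ℝ)
  have hH : MemLp (fun x ↦ ∑ i, h i x) 2 μ := memLp_finsetSum Finset.univ fun i _ ↦ hh i
  have hH0 : ∫ x, ∑ i, h i x ∂μ = 0 := by
    simp [integral_finsetSum _ fun i _ ↦ (hh i).integrable one_le_two, h0]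
  have hsum : ∀ x, (∑ i, (a * h i x + c)) ^ 2
      = (a * ∑ i, h i x + n * c) * (a * ∑ i, h i x + n * c) := fun x ↦ by
    simp [n, Finset.sum_add_distrib, Finset.mul_sum, sq]
  simp_rw [hsum]
  rw [integral_affine_mul_affine_s17 hH hH0, integral_sq_sum_of_integral_mul_eq_ite hh hcov]
  ring

theorem integral_welfare_of_centered {ι : Type*} [Fintype ι] [DecidableEq ι] {h : ι → Ω → ℝ}
    (hh : ∀ i, MemLp (h i) 2 μ) (h0 : ∀ i, ∫ x, h i x ∂μ = 0) {σ : ℝ}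
    (hcov : ∀ i j, ∫ x, h i x * h j x ∂μ = if i = j then 1 else σ) (a c d α k : ℝ) :
    ∫ x, (∑ i, ((h i x + d) * (a * h i x + c) - α * (a * h i x + c) ^ 2)
        - k * (∑ i, (a * h i x + c)) ^ 2) ∂μ
      = Fintype.card ι * (a + d * c - α * (a ^ 2 + c ^ 2))
        - k * (Fintype.card ι * (a ^ 2 * (1 + (Fintype.card ι - 1) * σ)
          + Fintype.card ι * c ^ 2)) := by
  have haff : ∀ i, MemLp (fun x ↦ a * h i x + c) 2 μ :=
    fun i ↦ ((hh i).const_mul a).add (memLp_const c)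
  have hsurplus : ∀ i, Integrable
      (fun x ↦ (h i x + d) * (a * h i x + c) - α * (a * h i x + c) ^ 2) μ := fun i ↦
    (((hh i).add (memLp_const d)).integrable_mul (haff i)).sub ((haff i).integrable_sq.const_mul α)
  rw [integral_sub (integrable_finsetSum _ fun i _ ↦ hsurplus i)
      ((memLp_finsetSum _ fun i _ ↦ haff i).integrable_sq.const_mul k),
    integral_finsetSum _ fun i _ ↦ hsurplus i, integral_const_mul,
    integral_sq_sum_affine hh h0 hcov]
  have hdiag : ∀ i, ∫ x, h i x ^ 2 ∂μ = 1 := fun i ↦ by simpa [sq] using hcov i i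
  simp [fun i ↦ integral_surplus (hh i) (h0 i) (hdiag i) a c d α]
  ring

end Moments

theorem stmt_17_general {Ω : Type*} [MeasurableSpace Ω] (μ : Measure Ω) [IsProbabilityMeasure μ]
    (N : ℕ) (hN : 1 ≤ N) (γ κ α gbar σ a b : ℝ)
    (g : Fin N → Ω → ℝ)
    (hL2 : ∀ i, MemLp (g i) 2 μ)
    (hmean : ∀ i, (∫ x, g i x ∂μ) = gbar)
    (hvar : ∀ i, (∫ x, (g i x - gbar) ^ 2 ∂μ) = 1)
    (hcov : ∀ i j, i ≠ j → (∫ x, (g i x - gbar) * (g j x - gbar) ∂μ) = σ)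
    (ω : Ω → ℝ)
    (s : Fin N → Ω → ℝ)
    (hs : ∀ i x, s i x = a * (g i x - gbar) + b * gbar)
    (L : Ω → ℝ) (hL : ∀ x, L x = ∑ i, s i x)
    (U : Ω → ℝ)
    (hU : ∀ x, U x = ∑ i,
      (-(s i x) * (γ / N) * (L x + ω x) + g i x * s i x - α * s i x ^ 2))
    (NR : Ω → ℝ)
    (hNR : ∀ x, NR x = (γ / N) * (L x + ω x) * L x - (κ / N) * L x ^ 2)
    (W : Ω → ℝ) (hW : ∀ x, W x = U x + NR x) :
    (∫ x, W x ∂μ) / N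
      = (b - (κ + α) * b ^ 2) * gbar ^ 2
        - ((((N : ℝ) - 1) / N) * κ * σ + κ / N + α) * a ^ 2 + a := by
  have hNpos : (0 : ℝ) < N := by exact_mod_cast hN
  set h : Fin N → Ω → ℝ := fun i x ↦ g i x - gbar
  have hh : ∀ i, MemLp (h i) 2 μ := fun i ↦ (hL2 i).sub (memLp_const gbar)
  have hh0 : ∀ i, ∫ x, h i x ∂μ = 0 := fun i ↦ by
    simp [h, integral_sub ((hL2 i).integrable one_le_two) (integrable_const _), hmean]
  have hhh : ∀ i j, ∫ x, h i x * h j x ∂μ = if i = j then 1 else σ := by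
    intro i j
    split_ifs with hij
    · subst hij
      simpa [sq] using hvar i
    · exact hcov i j hij
  have hWpt : ∀ x, W x = ∑ i, ((h i x + gbar) * (a * h i x + b * gbar)
        - α * (a * h i x + b * gbar) ^ 2) - κ / N * (∑ i, (a * h i x + b * gbar)) ^ 2 := by
    intro x
    rw [hW, hU, hNR, hL x, sum_utility_add_netRevenue]
    simp only [hs, h, sub_add_cancel]
  rw [integral_congr_ae (ae_of_all _ hWpt), integral_welfare_of_centered hh hh0 hhh]
  simp only [Fintype.card_fin]
  field_simp
  ring

/-- eq. (42): expected normalized welfare for symmetric BNE strategies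
`s_i = a(g_i − ḡ) + bḡ`; the price terms cancel pointwise, so the renewable term `ω`
only needs to be measurable. -/
theorem stmt_17 {Ω : Type*} [MeasurableSpace Ω] (μ : Measure Ω) [IsProbabilityMeasure μ]
    (N : ℕ) (hN : 1 ≤ N) (γ κ α gbar σ a b : ℝ)
    (hγ : 0 < γ) (hκ : 0 < κ) (hα : 0 < α)
    (g : Fin N → Ω → ℝ)
    (hL2 : ∀ i, MemLp (g i) 2 μ)
    (hmean : ∀ i, (∫ x, g i x ∂μ) = gbar)
    (hvar : ∀ i, (∫ x, (g i x - gbar) ^ 2 ∂μ) = 1)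
    (hcov : ∀ i j, i ≠ j → (∫ x, (g i x - gbar) * (g j x - gbar) ∂μ) = σ)
    (ω : Ω → ℝ) (hω : Measurable ω)
    (s : Fin N → Ω → ℝ)
    (hs : ∀ i x, s i x = a * (g i x - gbar) + b * gbar)
    (L : Ω → ℝ) (hL : ∀ x, L x = ∑ i, s i x)
    (U : Ω → ℝ)
    (hU : ∀ x, U x = ∑ i,
      (-(s i x) * (γ / N) * (L x + ω x) + g i x * s i x - α * s i x ^ 2))
    (NR : Ω → ℝ)
    (hNR : ∀ x, NR x = (γ / N) * (L x + ω x) * L x - (κ / N) * L x ^ 2)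
    (W : Ω → ℝ) (hW : ∀ x, W x = U x + NR x) :
    (∫ x, W x ∂μ) / N
      = (b - (κ + α) * b ^ 2) * gbar ^ 2
        - ((((N : ℝ) - 1) / N) * κ * σ + κ / N + α) * a ^ 2 + a :=
  stmt_17_general μ N hN γ κ α gbar σ a b g hL2 hmean hvar hcov ω s hs L hL U hU NR hNR W hW
end

section
/- Let γ > 0, κ > 0 and α > 0 be real numbers. Define c_W(b) = b − (κ+α)·b², b_S = 1/(γ + 2α), and b_W = 1/(2(κ+α)). Then c_W(b_S)/c_W(b_W) = (4α² + 4αγ + 4κ(γ − κ))/(4α² + 4αγ + γ²); this ratio is at most 1, with equality if and only if γ = 2κ. -/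
/-- welfare corollary, item 1 / eq. (43): for `c_W(b) = b − (κ+α)b²`,
`b_S = 1/(γ+2α)` and `b_W = 1/(2(κ+α))`, the ratio `c_W(b_S)/c_W(b_W)` equals
`(4α²+4αγ+4κ(γ−κ))/(4α²+4αγ+γ²)`; it is at most 1 with equality iff `γ = 2κ`. -/
theorem stmt_18 (γ κ α : ℝ) (hγ : 0 < γ) (hκ : 0 < κ) (hα : 0 < α)
    (cW : ℝ → ℝ) (hcW : ∀ b, cW b = b - (κ + α) * b ^ 2)
    (bS bW : ℝ) (hbS : bS = 1 / (γ + 2 * α)) (hbW : bW = 1 / (2 * (κ + α))) :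
    cW bS / cW bW
      = (4 * α ^ 2 + 4 * α * γ + 4 * κ * (γ - κ)) / (4 * α ^ 2 + 4 * α * γ + γ ^ 2)
    ∧ (4 * α ^ 2 + 4 * α * γ + 4 * κ * (γ - κ)) / (4 * α ^ 2 + 4 * α * γ + γ ^ 2) ≤ 1
    ∧ ((4 * α ^ 2 + 4 * α * γ + 4 * κ * (γ - κ)) / (4 * α ^ 2 + 4 * α * γ + γ ^ 2) = 1
        ↔ γ = 2 * κ) := by
  have hd : (0:ℝ) < 4 * α ^ 2 + 4 * α * γ + γ ^ 2 := by nlinarith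
  have h1 : γ + 2 * α ≠ 0 := by positivity
  have h2 : κ + α ≠ 0 := by positivity
  refine ⟨?_, ?_, ?_⟩
  · rw [hcW, hcW, hbS, hbW]
    rw [div_eq_div_iff]
    · field_simp
      ring
    · have : (1 / (2 * (κ + α)) : ℝ) - (κ + α) * (1 / (2 * (κ + α))) ^ 2
          = 1 / (4 * (κ + α)) := by field_simp; ring
      rw [this]; positivity
    · exact ne_of_gt hd
  · rw [div_le_one hd]; nlinarith [sq_nonneg (γ - 2 * κ)]
  · rw [div_eq_one_iff_eq (ne_of_gt hd)]
    constructor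
    · intro h; nlinarith [sq_nonneg (γ - 2 * κ)]
    · intro h; subst h; ring
end

section
/- Let γ > 0, κ > 0 and α > 0 be real numbers. Define c_W(b) = b − (κ+α)·b², b_U = 1/(2(γ+α)), and b_W = 1/(2(κ+α)). Then c_W(b_U)/c_W(b_W) = (κ+α)·(2γ + α − κ)/(γ+α)²; this ratio is at most 1, with equality if and only if γ = κ. -/
/-- welfare corollary, item 2 / eq. (44): for `c_W(b) = b − (κ+α)b²`,
`b_U = 1/(2(γ+α))` and `b_W = 1/(2(κ+α))`, the ratio `c_W(b_U)/c_W(b_W)` equals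
`(κ+α)(2γ+α−κ)/(γ+α)²`; it is at most 1 with equality iff `γ = κ`. -/
theorem stmt_19 (γ κ α : ℝ) (hγ : 0 < γ) (hκ : 0 < κ) (hα : 0 < α)
    (cW : ℝ → ℝ) (hcW : ∀ b, cW b = b - (κ + α) * b ^ 2)
    (bU bW : ℝ) (hbU : bU = 1 / (2 * (γ + α))) (hbW : bW = 1 / (2 * (κ + α))) :
    cW bU / cW bW = (κ + α) * (2 * γ + α - κ) / (γ + α) ^ 2
    ∧ (κ + α) * (2 * γ + α - κ) / (γ + α) ^ 2 ≤ 1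
    ∧ ((κ + α) * (2 * γ + α - κ) / (γ + α) ^ 2 = 1 ↔ γ = κ) := by
  have hga : (0:ℝ) < γ + α := by linarith
  have hka : (0:ℝ) < κ + α := by linarith
  have hga2 : (γ + α) ^ 2 ≠ 0 := by positivity
  have hgne : γ + α ≠ 0 := ne_of_gt hga
  have hkne : κ + α ≠ 0 := ne_of_gt hka
  have key : (γ + α) ^ 2 - (κ + α) * (2 * γ + α - κ) = (γ - κ) ^ 2 := by ring
  refine ⟨?_, ?_, ?_⟩
  · have h1 : cW bU = (2 * γ + α - κ) / (4 * (γ + α) ^ 2) := by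
      rw [hcW, hbU]; field_simp; ring
    have h2 : cW bW = 1 / (4 * (κ + α)) := by
      rw [hcW, hbW]; field_simp; ring
    rw [h1, h2]
    field_simp
  · rw [div_le_one (by positivity)]
    nlinarith [sq_nonneg (γ - κ)]
  · rw [div_eq_one_iff_eq (by positivity)]
    constructor
    · intro h
      have : (γ - κ) ^ 2 = 0 := by nlinarith
      have := pow_eq_zero_iff (n := 2) (by norm_num) |>.mp this
      linarith
    · intro h; subst h; ring
end
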